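/- Let A be a real symmetric (2n−1)×(2n−1) matrix, let Ã be the (2n−2)×(2n−2) matrix obtained by deleting the last row and column of A, and let Â be the 2n×2n bordered matrix whose first row is (0,…,0,1), middle rows (0 | Ã | v), last row (1, vᵀ, α), where A = (Ã v; vᵀ α). Then for every integer j ≥ 0, the elementary symmetric functions of eigenvalues satisfy e_{2j+1}(Â) = e_{2j+1}(A) − e_{2j−1}(Ã), with the convention that e_k(M) = 0 whenever k < 0 or k exceeds the size of M. In particular, all odd-degree elementary symmetric functions of the eigenvalues of Â vanish if and only if e_{2j+1}(A) = e_{2j−1}(Ã) for all j ≥ 0. -/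

import Mathlib

open Polynomial Matrix

/-- The `k`-th elementary symmetric function of the eigenvalues of a square real
matrix, indexed by an integer `k`, with the convention that it vanishes for
`k < 0` or `k` larger than the size of the matrix.  For `0 ≤ k ≤ m` it equals
`(-1)^k` times the coefficient of `X^(m-k)` in the characteristic polynomial. -/
noncomputable def esymmEig {ι : Type*} [Fintype ι] [DecidableEq ι]
    (M : Matrix ι ι ℝ) (k : ℤ) : ℝ :=
  if 0 ≤ k ∧ k ≤ (Fintype.card ι : ℤ) then
    (-1) ^ k.toNat * M.charpoly.coeff (Fintype.card ι - k.toNat)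
  else 0

/-!
Bordering `A` by `e_last` gives `χ_Â = X · χ_A - χ_Ã`. Indeed, for any block matrix
`M = [[a, b], [c, D]]` right multiplication by `[[det D • 1, 0], [-adj D · c, 1]]` makes `M`
block triangular, so `det M · det D = (a det D - b adj(D) c) · det D`; for `D = X - A` the
factor `det D = χ_A` is monic, hence cancellable over any commutative ring, and
`b adj(D) c` is the `(last, last)` cofactor of `X - A`, which is `χ_Ã`. Comparing
coefficients, indexed by `ℤ` so that the vanishing conventions for `e_k` need no case
analysis, gives `e_k(Â) = e_k(A) - e_{k-2}(Ã)` for every `k`.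
-/

namespace Matrix
variable {m n R : Type*} [Fintype m] [Fintype n] [DecidableEq m] [DecidableEq n] [CommRing R]

theorem det_fromBlocks_mul_det_pow (A : Matrix m m R) (B : Matrix m n R) (C : Matrix n m R)
    (D : Matrix n n R) :
    (fromBlocks A B C D).det * D.det ^ Fintype.card m
      = (D.det • A - B * D.adjugate * C).det * D.det := by
  have hmul : fromBlocks A B C D * fromBlocks (D.det • 1) 0 (-(D.adjugate * C)) 1
      = fromBlocks (D.det • A - B * D.adjugate * C) B 0 D := by
    simp [fromBlocks_multiply, ← Matrix.mul_assoc, mul_adjugate, sub_eq_add_neg]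
  have := congrArg det hmul
  rwa [det_mul, det_fromBlocks_zero₁₂, det_fromBlocks_zero₂₁, det_smul, det_one, det_one,
    mul_one, mul_one] at this

theorem charmatrix_submatrix {l : Type*} [Fintype l] [DecidableEq l] (M : Matrix n n R)
    {e : l → n} (he : Function.Injective e) :
    (charmatrix M).submatrix e e = charmatrix (M.submatrix e e) := by
  ext i j : 1
  by_cases h : i = j
  · subst h; simp
  · rw [submatrix_apply, charmatrix_apply_ne _ _ _ (he.ne h), charmatrix_apply_ne _ _ _ h,
      submatrix_apply]

theorem charpoly_fromBlocks_zero_replicateRow_replicateCol {ι : Type*} [Fintype ι]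
    [DecidableEq ι] [Unique ι] (u v : n → R) (A : Matrix n n R) :
    (fromBlocks (0 : Matrix ι ι R) (replicateRow ι v) (replicateCol ι u) A).charpoly
      = X * A.charpoly - (C ∘ v) ⬝ᵥ (charmatrix A).adjugate *ᵥ (C ∘ u) := by
  have h := det_fromBlocks_mul_det_pow (charmatrix (0 : Matrix ι ι R))
    (-(replicateRow ι v).map C) (-(replicateCol ι u).map C) (charmatrix A)
  rw [Fintype.card_unique, pow_one, ← charmatrix_fromBlocks] at h
  refine A.charpoly_monic.isRegular.right h |>.trans ?_
  rw [det_unique]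
  simp only [charpoly, charmatrix_zero, scalar_apply, Matrix.neg_mul, Matrix.mul_neg, neg_neg,
    sub_apply, smul_apply, diagonal_apply_eq, smul_eq_mul, mul_comm, sub_right_inj]
  change (replicateRow ι (C ∘ v) * (charmatrix A).adjugate * replicateCol ι (C ∘ u)) _ _ = _
  rw [Matrix.mul_assoc, ← replicateCol_mulVec, replicateRow_mul_replicateCol_apply]

theorem adjugate_charmatrix_last_last {k : ℕ} (A : Matrix (Fin (k + 1)) (Fin (k + 1)) R) :
    (charmatrix A).adjugate (Fin.last k) (Fin.last k)
      = (A.submatrix Fin.castSucc Fin.castSucc).charpoly := by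
  rw [adjugate_fin_succ_eq_det_submatrix, Fin.val_last, ← two_mul, pow_mul, neg_one_sq, one_pow,
    one_mul, Fin.succAbove_last, charmatrix_submatrix _ (Fin.castSucc_injective k), charpoly]

theorem charpoly_bordered_last {k : ℕ} (A : Matrix (Fin (k + 1)) (Fin (k + 1)) R) :
    (fromBlocks (0 : Matrix (Fin 1) (Fin 1) R)
      (fun _ j => if j = Fin.last k then (1 : R) else 0)
      (fun i _ => if i = Fin.last k then (1 : R) else 0) A).charpoly
      = X * A.charpoly - (A.submatrix Fin.castSucc Fin.castSucc).charpoly := by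
  have hrow : (fun _ j => if j = Fin.last k then (1 : R) else 0 : Matrix (Fin 1) (Fin (k + 1)) R)
      = replicateRow (Fin 1) (Pi.single (Fin.last k) 1) := by
    ext _ j; simp [Pi.single_apply]
  have hcol : (fun i _ => if i = Fin.last k then (1 : R) else 0 : Matrix (Fin (k + 1)) (Fin 1) R)
      = replicateCol (Fin 1) (Pi.single (Fin.last k) 1) := by
    ext i _; simp [Pi.single_apply]
  have hC : (C : R → R[X]) ∘ Pi.single (Fin.last k) 1 = Pi.single (Fin.last k) 1 := by
    ext j : 1
    by_cases hj : j = Fin.last k <;> simp [hj]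
  rw [hrow, hcol, charpoly_fromBlocks_zero_replicateRow_replicateCol,
    ← adjugate_charmatrix_last_last, hC, single_dotProduct, one_mul, mulVec_single_one]
  rfl

end Matrix

namespace Polynomial
variable {R : Type*}

def coeffInt [Semiring R] (p : R[X]) (i : ℤ) : R := if 0 ≤ i then p.coeff i.toNat else 0

section Semiring
variable [Semiring R] (p : R[X])

@[simp]
theorem coeffInt_natCast (n : ℕ) : p.coeffInt n = p.coeff n := by
  simp [coeffInt]

theorem coeffInt_of_neg {i : ℤ} (hi : i < 0) : p.coeffInt i = 0 :=
  if_neg hi.not_ge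

theorem coeffInt_eq_zero_of_natDegree_lt {i : ℤ} (hi : (p.natDegree : ℤ) < i) :
    p.coeffInt i = 0 := by
  lift i to ℕ using by omega
  rw [coeffInt_natCast, coeff_eq_zero_of_natDegree_lt (by omega)]

theorem coeffInt_X_mul (i : ℤ) : (X * p).coeffInt i = p.coeffInt (i - 1) := by
  rcases lt_trichotomy i 0 with hi | rfl | hi
  · rw [coeffInt_of_neg _ hi, coeffInt_of_neg _ (by omega)]
  · simp [coeffInt]
  · lift i to ℕ using hi.le
    obtain ⟨n, rfl⟩ := Nat.exists_eq_add_one_of_ne_zero (by omega : i ≠ 0)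
    push_cast
    rw [add_sub_cancel_right, ← Nat.cast_succ, coeffInt_natCast, coeffInt_natCast, coeff_X_mul]

end Semiring

theorem coeffInt_sub [Ring R] (p q : R[X]) (i : ℤ) :
    (p - q).coeffInt i = p.coeffInt i - q.coeffInt i := by
  unfold coeffInt; split_ifs <;> simp

end Polynomial

theorem esymmEig_eq_neg_one_zpow_mul_coeffInt {ι : Type*} [Fintype ι] [DecidableEq ι]
    (M : Matrix ι ι ℝ) (k : ℤ) :
    esymmEig M k = (-1) ^ k * M.charpoly.coeffInt (Fintype.card ι - k) := by
  unfold esymmEig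
  split_ifs with hk
  · lift k to ℕ using hk.1
    rw [← Nat.cast_sub (by omega), coeffInt_natCast, zpow_natCast, Int.toNat_natCast]
  · rcases not_and_or.mp hk with hk | hk
    · rw [coeffInt_eq_zero_of_natDegree_lt _ (by rw [charpoly_natDegree_eq_dim]; omega), mul_zero]
    · rw [coeffInt_of_neg _ (by omega), mul_zero]

theorem esymmEig_eq_sub_of_charpoly_eq {ι κ μ : Type*} [Fintype ι] [DecidableEq ι] [Fintype κ]
    [DecidableEq κ] [Fintype μ] [DecidableEq μ] {M : Matrix ι ι ℝ} {A : Matrix κ κ ℝ}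
    {B : Matrix μ μ ℝ} (hι : Fintype.card ι = Fintype.card κ + 1)
    (hκ : Fintype.card κ = Fintype.card μ + 1) (hM : M.charpoly = X * A.charpoly - B.charpoly)
    (k : ℤ) : esymmEig M k = esymmEig A k - esymmEig B (k - 2) := by
  have hsign : (-1 : ℝ) ^ (k - 2) = (-1) ^ k := by
    rw [zpow_sub₀ (by norm_num)]
    norm_num
  rw [esymmEig_eq_neg_one_zpow_mul_coeffInt, esymmEig_eq_neg_one_zpow_mul_coeffInt,
    esymmEig_eq_neg_one_zpow_mul_coeffInt, hM, coeffInt_sub, coeffInt_X_mul, hsign, hι, hκ]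
  push_cast
  ring_nf

theorem esymm_bordered_general (n : ℕ)
    (A : Matrix (Fin (2 * n + 1)) (Fin (2 * n + 1)) ℝ)
    (Atil : Matrix (Fin (2 * n)) (Fin (2 * n)) ℝ)
    (hAtil : Atil = A.submatrix Fin.castSucc Fin.castSucc)
    (Ahat : Matrix (Fin 1 ⊕ Fin (2 * n + 1)) (Fin 1 ⊕ Fin (2 * n + 1)) ℝ)
    (hAhat : Ahat = Matrix.fromBlocks 0
      (fun _ j => if j = Fin.last (2 * n) then (1 : ℝ) else 0)
      (fun i _ => if i = Fin.last (2 * n) then (1 : ℝ) else 0) A) :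
    (∀ j : ℤ, 0 ≤ j →
      esymmEig Ahat (2 * j + 1) = esymmEig A (2 * j + 1) - esymmEig Atil (2 * j - 1)) ∧
    ((∀ j : ℤ, 0 ≤ j → esymmEig Ahat (2 * j + 1) = 0) ↔
      (∀ j : ℤ, 0 ≤ j → esymmEig A (2 * j + 1) = esymmEig Atil (2 * j - 1))) := by
  have hchar : Ahat.charpoly = X * A.charpoly - Atil.charpoly := by
    rw [hAhat, hAtil]
    exact charpoly_bordered_last A
  have hodd (j : ℤ) :
      esymmEig Ahat (2 * j + 1) = esymmEig A (2 * j + 1) - esymmEig Atil (2 * j - 1) := by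
    rw [esymmEig_eq_sub_of_charpoly_eq (by simp [add_comm]) (by simp) hchar]
    ring_nf
  refine ⟨fun j _ => hodd j, forall₂_congr fun j _ => ?_⟩
  rw [hodd, sub_eq_zero]

/-- For a symmetric `(2n-1)×(2n-1)` matrix `A` (here of size `2n+1`
with `n ≥ 0`, so that the size is odd), with `Ã` obtained by deleting the last row
and column and `Â` the bordered matrix of even size, one has
`e_{2j+1}(Â) = e_{2j+1}(A) - e_{2j-1}(Ã)` for all integers `j ≥ 0`; in particular
all odd-degree elementary symmetric functions of the eigenvalues of `Â` vanish
iff `e_{2j+1}(A) = e_{2j-1}(Ã)` for all `j ≥ 0`. -/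
theorem esymm_bordered (n : ℕ) (hn : 1 ≤ n + 1)
    (A : Matrix (Fin (2 * n + 1)) (Fin (2 * n + 1)) ℝ) (hA : A.IsSymm)
    (Atil : Matrix (Fin (2 * n)) (Fin (2 * n)) ℝ)
    (hAtil : Atil = A.submatrix Fin.castSucc Fin.castSucc)
    (Ahat : Matrix (Fin 1 ⊕ Fin (2 * n + 1)) (Fin 1 ⊕ Fin (2 * n + 1)) ℝ)
    (hAhat : Ahat = Matrix.fromBlocks 0
      (fun _ j => if j = Fin.last (2 * n) then (1 : ℝ) else 0)
      (fun i _ => if i = Fin.last (2 * n) then (1 : ℝ) else 0) A) :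
    (∀ j : ℤ, 0 ≤ j →
      esymmEig Ahat (2 * j + 1) = esymmEig A (2 * j + 1) - esymmEig Atil (2 * j - 1)) ∧
    ((∀ j : ℤ, 0 ≤ j → esymmEig Ahat (2 * j + 1) = 0) ↔
      (∀ j : ℤ, 0 ≤ j → esymmEig A (2 * j + 1) = esymmEig Atil (2 * j - 1))) :=
  esymm_bordered_general n A Atil hAtil Ahat hAhat
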